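/- arXiv:2010.12330 — 2 statements merged into one kernel-verified Lean document; each statement's English description precedes it below -/
import Mathlib

section
/- Let T be an ε-critical tournament with |T| = n and let c > 0 satisfy ε < log_{c/2}(1/2). Then for every two disjoint subsets X, Y ⊆ V(T) with |X| ≥ cn and |Y| ≥ cn, there exist an integer k ≥ cn/2 and vertices x_1,...,x_k ∈ X and y_1,...,y_k ∈ Y (all distinct) such that y_i is adjacent to x_i (i.e., the arc (y_i, x_i) is present) for i = 1,...,k. -/
open scoped Classical

def IsTournament {V : Type*} (E : V → V → Prop) : Prop :=
  (∀ v, ¬ E v v) ∧ ∀ u v : V, u ≠ v → (E u v ↔ ¬ E v u)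

def TransOn {V : Type*} (E : V → V → Prop) (s : Finset V) : Prop :=
  ∀ a ∈ s, ∀ b ∈ s, ∀ c ∈ s, E a b → E b c → E a c

noncomputable def trOn {V : Type*} (E : V → V → Prop) (A : Finset V) : ℕ :=
  A.powerset.sup fun s => if TransOn E s then s.card else 0

noncomputable def trT {V : Type*} (E : V → V → Prop) [Fintype V] : ℕ :=
  trOn E Finset.univ

def IsCritical {V : Type*} [Fintype V] (E : V → V → Prop) (ε : ℝ) : Prop :=
  (trT E : ℝ) < (Fintype.card V : ℝ) ^ ε ∧
  ∀ A : Finset V, A ≠ Finset.univ → ((A.card : ℝ) ^ ε ≤ (trOn E A : ℝ))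

noncomputable def dens {V : Type*} (E : V → V → Prop) (X Y : Finset V) : ℝ :=
  (((X ×ˢ Y).filter fun p => E p.1 p.2).card : ℝ) / ((X.card : ℝ) * (Y.card : ℝ))

def SmoothStruct {V : Type*} [Fintype V] (E : V → V → Prop) (c lam : ℝ) {m : ℕ}
    (w : Fin m → Bool) (S : Fin m → Finset V) : Prop :=
  (∀ i j : Fin m, i ≠ j → Disjoint (S i) (S j)) ∧
  (∀ i, w i = false → c * (Fintype.card V : ℝ) ≤ ((S i).card : ℝ)) ∧
  (∀ i, w i = true → TransOn E (S i) ∧ c * (trT E : ℝ) ≤ ((S i).card : ℝ)) ∧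
  (∀ i j : Fin m, i < j →
    (∀ v ∈ S i, 1 - lam ≤ dens E {v} (S j)) ∧ (∀ v ∈ S j, 1 - lam ≤ dens E (S i) {v}))

open Finset

/-!
Take a maximal family of disjoint backward pairs `y → x` with `x ∈ X`, `y ∈ Y`. If it had fewer than
`cn/2` pairs, the unmatched parts `X' ⊆ X`, `Y' ⊆ Y` would both have more than `cn/2` vertices and,
by maximality, every arc between them would go from `X'` to `Y'`. A transitive subtournament of `X'`
followed by one of `Y'` is then transitive, so criticality gives
`n^ε > tr(T) ≥ tr(X') + tr(Y') ≥ |X'|^ε + |Y'|^ε > 2 (c/2)^ε n^ε`, and `ε < log_{c/2}(1/2)` says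
exactly that `2 (c/2)^ε > 1`.
-/

section Transitive

variable {V : Type*} (E : V → V → Prop)

lemma card_le_trOn {A s : Finset V} (hs : s ⊆ A) (h : TransOn E s) : s.card ≤ trOn E A := by
  simpa [h, trOn] using
    Finset.le_sup (f := fun s => if TransOn E s then s.card else 0) (mem_powerset.2 hs)

lemma exists_transOn_card_eq_trOn (A : Finset V) :
    ∃ s ⊆ A, TransOn E s ∧ s.card = trOn E A := by
  obtain ⟨s, hs, hval⟩ := exists_mem_eq_sup A.powerset ⟨∅, empty_mem_powerset A⟩
    fun s => if TransOn E s then s.card else 0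
  by_cases h : TransOn E s
  · exact ⟨s, mem_powerset.1 hs, h, by rw [trOn, hval, if_pos h]⟩
  · exact ⟨∅, empty_subset A, by simp [TransOn], by simp [trOn, hval, h]⟩

lemma TransOn.union_of_forward {s t : Finset V} (hs : TransOn E s) (ht : TransOn E t)
    (hst : ∀ a ∈ s, ∀ b ∈ t, E a b ∧ ¬ E b a) : TransOn E (s ∪ t) := by
  intro p hp q hq r hr hpq hqr
  rcases mem_union.1 hp with hp | hp <;> rcases mem_union.1 hq with hq | hq <;>
    rcases mem_union.1 hr with hr | hr
  · exact hs p hp q hq r hr hpq hqr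
  · exact (hst p hp r hr).1
  · exact absurd hqr (hst r hr q hq).2
  · exact (hst p hp r hr).1
  · exact absurd hpq (hst q hq p hp).2
  · exact absurd hpq (hst q hq p hp).2
  · exact absurd hqr (hst r hr q hq).2
  · exact ht p hp q hq r hr hpq hqr

lemma trOn_add_trOn_le (hT : IsTournament E) {X Y A : Finset V} (hXY : Disjoint X Y)
    (hXA : X ⊆ A) (hYA : Y ⊆ A) (hback : ∀ a ∈ X, ∀ b ∈ Y, ¬ E b a) :
    trOn E X + trOn E Y ≤ trOn E A := by
  obtain ⟨s, hsX, hs, hs_card⟩ := exists_transOn_card_eq_trOn E X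
  obtain ⟨t, htY, ht, ht_card⟩ := exists_transOn_card_eq_trOn E Y
  have hforward : ∀ a ∈ s, ∀ b ∈ t, E a b ∧ ¬ E b a := fun a ha b hb =>
    have hab : a ≠ b := fun h => disjoint_left.1 hXY (hsX ha) (h ▸ htY hb)
    ⟨(hT.2 a b hab).2 (hback a (hsX ha) b (htY hb)), hback a (hsX ha) b (htY hb)⟩
  rw [← hs_card, ← ht_card, ← card_union_of_disjoint (hXY.mono hsX htY)]
  exact card_le_trOn E (union_subset (hsX.trans hXA) (htY.trans hYA))
    (hs.union_of_forward E ht hforward)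

end Transitive

section Matching

variable {V : Type*} (E : V → V → Prop)

def IsBackwardMatching (X Y : Finset V) {k : ℕ} (x y : Fin k → V) : Prop :=
  Function.Injective x ∧ Function.Injective y ∧
    (∀ i, x i ∈ X) ∧ (∀ i, y i ∈ Y) ∧ ∀ i, E (y i) (x i)

lemma isBackwardMatching_zero (X Y : Finset V) (x y : Fin 0 → V) :
    IsBackwardMatching E X Y x y :=
  ⟨Function.injective_of_subsingleton _, Function.injective_of_subsingleton _,
    fun i => i.elim0, fun i => i.elim0, fun i => i.elim0⟩

lemma IsBackwardMatching.cons {X Y : Finset V} {a b : V} {k : ℕ} {x y : Fin k → V}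
    (h : IsBackwardMatching E (X.erase a) (Y.erase b) x y) (ha : a ∈ X) (hb : b ∈ Y)
    (hba : E b a) : IsBackwardMatching E X Y (Fin.cons a x) (Fin.cons b y) := by
  obtain ⟨hx, hy, hxX, hyY, hE⟩ := h
  refine ⟨Fin.cons_injective_iff.2 ⟨fun ⟨i, hi⟩ => ne_of_mem_erase (hxX i) hi, hx⟩,
    Fin.cons_injective_iff.2 ⟨fun ⟨i, hi⟩ => ne_of_mem_erase (hyY i) hi, hy⟩,
    Fin.cases ha fun i => mem_of_mem_erase (hxX i),
    Fin.cases hb fun i => mem_of_mem_erase (hyY i),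
    Fin.cases hba hE⟩

lemma exists_maximal_backwardMatching (X Y : Finset V) :
    ∃ (k : ℕ) (x y : Fin k → V), IsBackwardMatching E X Y x y ∧
      ∃ X' ⊆ X, ∃ Y' ⊆ Y, X'.card + k = X.card ∧ Y'.card + k = Y.card ∧
        ∀ a ∈ X', ∀ b ∈ Y', ¬ E b a := by
  induction X using Finset.strongInduction generalizing Y with
  | _ X ih =>
    by_cases h : ∃ a ∈ X, ∃ b ∈ Y, E b a
    · obtain ⟨a, ha, b, hb, hba⟩ := h
      obtain ⟨k, x, y, hm, X', hX', Y', hY', hX'_card, hY'_card, hback⟩ :=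
        ih _ (erase_ssubset ha) (Y.erase b)
      refine ⟨k + 1, Fin.cons a x, Fin.cons b y, hm.cons E ha hb hba, X',
        hX'.trans (erase_subset _ _), Y', hY'.trans (erase_subset _ _), ?_, ?_, hback⟩
      · rw [card_erase_of_mem ha] at hX'_card
        have := card_pos.2 ⟨a, ha⟩
        omega
      · rw [card_erase_of_mem hb] at hY'_card
        have := card_pos.2 ⟨b, hb⟩
        omega
    · push Not at h
      exact ⟨0, Fin.elim0, Fin.elim0, isBackwardMatching_zero E X Y _ _,
        X, subset_rfl, Y, subset_rfl, rfl, rfl, h⟩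

end Matching

lemma lt_rpow_of_lt_logb {b ε x : ℝ} (hb : 0 < b) (hε : 0 < ε) (hx₀ : 0 < x) (hx₁ : x ≤ 1)
    (h : ε < Real.logb b x) : x < b ^ ε := by
  have hb₁ : b < 1 := by
    by_contra! hb₁
    rcases hb₁.eq_or_lt with rfl | hb₁
    · rw [Real.logb_one_left] at h
      linarith
    · linarith [Real.logb_nonpos hb₁ hx₀.le hx₁]
  exact (Real.lt_logb_iff_rpow_lt_of_base_lt_one hb hb₁ hx₀).1 h

lemma IsCritical.card_le_of_forall_not_backward {V : Type*} [Fintype V] {E : V → V → Prop}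
    {ε c : ℝ} (hcrit : IsCritical E ε) (hT : IsTournament E) (hε : 0 ≤ ε) (hc : 0 < c)
    (hhalf : 1 / 2 < (c / 2) ^ ε) {X Y : Finset V} (hXY : Disjoint X Y)
    (hback : ∀ a ∈ X, ∀ b ∈ Y, ¬ E b a) (hX : c * Fintype.card V / 2 < X.card) :
    (Y.card : ℝ) ≤ c * Fintype.card V / 2 := by
  by_contra! hY
  set n : ℝ := (Fintype.card V : ℝ)
  have hcn : 0 ≤ c * n / 2 := by positivity
  have hX_pos : 0 < X.card := by exact_mod_cast hcn.trans_lt hX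
  have hY_pos : 0 < Y.card := by exact_mod_cast hcn.trans_lt hY
  have hn : 0 < n := Nat.cast_pos.2 (hX_pos.trans_le (card_le_univ X))
  have hX_ne : X ≠ univ := by
    rintro rfl
    obtain ⟨b, hb⟩ := card_pos.1 hY_pos
    exact disjoint_right.1 hXY hb (mem_univ b)
  have hY_ne : Y ≠ univ := by
    rintro rfl
    obtain ⟨a, ha⟩ := card_pos.1 hX_pos
    exact disjoint_left.1 hXY ha (mem_univ a)
  have hpow : ∀ A : Finset V, c * n / 2 < A.card → (c / 2) ^ ε * n ^ ε ≤ (A.card : ℝ) ^ ε :=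
    fun A hA => by
      rw [← Real.mul_rpow (by positivity) hn.le]
      exact Real.rpow_le_rpow (by positivity) (by linarith) hε
  refine lt_irrefl (n ^ ε) ?_
  calc n ^ ε = 2 * (1 / 2) * n ^ ε := by ring
    _ < 2 * (c / 2) ^ ε * n ^ ε := by gcongr
    _ ≤ (X.card : ℝ) ^ ε + (Y.card : ℝ) ^ ε := by linarith [hpow X hX, hpow Y hY]
    _ ≤ trOn E X + trOn E Y := add_le_add (hcrit.2 X hX_ne) (hcrit.2 Y hY_ne)
    _ ≤ trT E := by
      exact_mod_cast trOn_add_trOn_le E hT hXY (subset_univ X) (subset_univ Y) hback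
    _ < n ^ ε := hcrit.1

/-- In an ε-critical tournament with `ε < log_{c/2}(1/2)`, any two disjoint sets
of size at least `cn` admit `k ≥ cn/2` disjoint "backward" pairs. -/
theorem critical_many_backward_pairs {V : Type*} [Fintype V] (E : V → V → Prop)
    (ε c : ℝ) (hT : IsTournament E) (hε : 0 < ε) (hcrit : IsCritical E ε)
    (hc : 0 < c) (hlog : ε < Real.logb (c / 2) (1 / 2))
    (X Y : Finset V) (hdisj : Disjoint X Y)
    (hX : c * (Fintype.card V : ℝ) ≤ (X.card : ℝ))
    (hY : c * (Fintype.card V : ℝ) ≤ (Y.card : ℝ)) :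
    ∃ k : ℕ, c * (Fintype.card V : ℝ) / 2 ≤ (k : ℝ) ∧
      ∃ x : Fin k → V, ∃ y : Fin k → V,
        Function.Injective x ∧ Function.Injective y ∧
        (∀ i, x i ∈ X) ∧ (∀ i, y i ∈ Y) ∧ ∀ i, E (y i) (x i) := by
  obtain ⟨k, x, y, hm, X', hX', Y', hY', hX'_card, hY'_card, hback⟩ :=
    exists_maximal_backwardMatching E X Y
  refine ⟨k, ?_, x, y, hm⟩
  by_contra! hk
  have hhalf := lt_rpow_of_lt_logb (by positivity) hε (by norm_num) (by norm_num) hlog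
  have hX'_card' : (X'.card : ℝ) + k = X.card := by exact_mod_cast hX'_card
  have hY'_card' : (Y'.card : ℝ) + k = Y.card := by exact_mod_cast hY'_card
  have := hcrit.card_le_of_forall_not_backward hT hε.le hc hhalf (hdisj.mono hX' hY') hback
    (by linarith)
  linarith
end

section
/- Let 0 < λ < 1 be a constant, T a tournament, and (S_1,...,S_{|w|}) a smooth (c,λ,w)-structure of T. If A is a set of k vertices lying in ⋃_{i≠j} S_i with kλ < 1, then there exists a vertex v ∈ S_j such that for every a ∈ A with a ∈ S_i: if i < j then a is adjacent to v, and if i > j then v is adjacent to a. -/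
/-!
Each vertex `a ∈ A` lies in a single part `S i`, and the density condition of the structure says
that at most a `λ`-fraction of `S j` is oriented the wrong way relative to `a`. A union bound over
the `k` vertices of `A` excludes at most `kλ · |S_j| < |S_j|` vertices, so some vertex of the
(nonempty) part `S j` survives.
-/

open scoped Classical

open Finset

section

variable {V : Type*} (E : V → V → Prop)

theorem transOn_singleton (v : V) : TransOn E {v} := by
  intro a ha b hb _ hc hab _
  rw [mem_singleton] at ha hb hc
  subst ha hb hc
  exact hab

theorem one_le_trT [Fintype V] [Nonempty V] : 1 ≤ trT E := by
  obtain ⟨v⟩ := ‹Nonempty V›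
  have hle := le_sup (f := fun s => if TransOn E s then #s else 0)
    (mem_powerset.mpr (subset_univ {v}))
  simpa [trT, trOn, transOn_singleton] using hle

theorem dens_singleton_left (a : V) (Y : Finset V) :
    dens E {a} Y = #(Y.filter (E a ·)) / #Y := by
  unfold _root_.dens
  rw [singleton_product, filter_map, card_map, card_singleton, Nat.cast_one, one_mul]
  rfl

theorem dens_singleton_right (a : V) (Y : Finset V) :
    dens E Y {a} = #(Y.filter (E · a)) / #Y := by
  unfold _root_.dens
  rw [product_singleton, filter_map, card_map, card_singleton, Nat.cast_one, mul_one]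
  rfl

end

theorem card_filter_not_le_of_le_div {V : Type*} {Y : Finset V} (p : V → Prop) {lam : ℝ}
    (hY : Y.Nonempty) (h : 1 - lam ≤ #(Y.filter p) / #Y) :
    #(Y.filter (¬ p ·)) ≤ lam * #Y := by
  have hsplit : (#(Y.filter p) : ℝ) + #(Y.filter (¬ p ·)) = #Y := by
    exact_mod_cast card_filter_add_card_filter_not p
  rw [le_div_iff₀ (by exact_mod_cast hY.card_pos)] at h
  linarith

theorem exists_forall_of_card_filter_not_le {α V : Type*} {A : Finset α} {Y : Finset V}
    (P : α → V → Prop) {lam : ℝ} (hY : Y.Nonempty)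
    (hP : ∀ a ∈ A, #(Y.filter (¬ P a ·)) ≤ lam * #Y) (hk : #A * lam < 1) :
    ∃ v ∈ Y, ∀ a ∈ A, P a v := by
  by_contra! hbad
  have hcover : Y ⊆ A.biUnion fun a => Y.filter (¬ P a ·) := by
    intro v hv
    obtain ⟨a, ha, hPav⟩ := hbad v hv
    exact mem_biUnion.mpr ⟨a, ha, mem_filter.mpr ⟨hv, hPav⟩⟩
  have hYpos : (0 : ℝ) < #Y := by exact_mod_cast hY.card_pos
  have : (#Y : ℝ) < #Y :=
    calc (#Y : ℝ) ≤ ∑ a ∈ A, (#(Y.filter (¬ P a ·)) : ℝ) := by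
          exact_mod_cast (card_le_card hcover).trans card_biUnion_le
      _ ≤ ∑ _a ∈ A, lam * #Y := sum_le_sum hP
      _ = #A * lam * #Y := by rw [sum_const, nsmul_eq_mul, mul_assoc]
      _ < 1 * #Y := mul_lt_mul_of_pos_right hk hYpos
      _ = #Y := one_mul _
  exact lt_irrefl _ this

namespace SmoothStruct

variable {V : Type*} [Fintype V] {E : V → V → Prop} {c lam : ℝ} {m : ℕ} {w : Fin m → Bool}
  {S : Fin m → Finset V}

theorem nonempty [Nonempty V] (hS : SmoothStruct E c lam w S) (hc : 0 < c) (j : Fin m) :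
    (S j).Nonempty := by
  rw [← card_pos, ← Nat.cast_pos (α := ℝ)]
  cases hw : w j with
  | false =>
    have hV : (1 : ℝ) ≤ Fintype.card V := by exact_mod_cast Fintype.card_pos
    nlinarith [hS.2.1 j hw]
  | true =>
    have htr : (1 : ℝ) ≤ trT E := by exact_mod_cast one_le_trT E
    nlinarith [(hS.2.2.1 j hw).2]

theorem eq_of_mem_of_mem (hS : SmoothStruct E c lam w S) {a : V} {i i' : Fin m}
    (hi : a ∈ S i) (hi' : a ∈ S i') : i = i' := by
  by_contra hne
  exact disjoint_left.mp (hS.1 i i' hne) hi hi'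

theorem card_filter_not_adj_le_of_lt (hS : SmoothStruct E c lam w S) {i j : Fin m}
    (hne : (S j).Nonempty) (hij : i < j) {a : V} (ha : a ∈ S i) :
    #((S j).filter (¬ E a ·)) ≤ lam * #(S j) :=
  card_filter_not_le_of_le_div _ hne (dens_singleton_left E a (S j) ▸ (hS.2.2.2 i j hij).1 a ha)

theorem card_filter_not_adj_le_of_gt (hS : SmoothStruct E c lam w S) {i j : Fin m}
    (hne : (S j).Nonempty) (hji : j < i) {a : V} (ha : a ∈ S i) :
    #((S j).filter (¬ E · a)) ≤ lam * #(S j) :=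
  card_filter_not_le_of_le_div _ hne (dens_singleton_right E a (S j) ▸ (hS.2.2.2 j i hji).2 a ha)

def Compatible (E : V → V → Prop) (S : Fin m → Finset V) (j : Fin m) (a v : V) : Prop :=
  ∀ i, a ∈ S i → (i < j → E a v) ∧ (j < i → E v a)

theorem compatible_of_lt (hS : SmoothStruct E c lam w S) {i j : Fin m} (hij : i < j) {a v : V}
    (ha : a ∈ S i) (hav : E a v) : Compatible E S j a v := by
  intro i' hi'
  obtain rfl := hS.eq_of_mem_of_mem ha hi'
  exact ⟨fun _ => hav, fun hji => absurd (hij.trans hji) (lt_irrefl i)⟩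

theorem compatible_of_gt (hS : SmoothStruct E c lam w S) {i j : Fin m} (hji : j < i) {a v : V}
    (ha : a ∈ S i) (hva : E v a) : Compatible E S j a v := by
  intro i' hi'
  obtain rfl := hS.eq_of_mem_of_mem ha hi'
  exact ⟨fun hij => absurd (hji.trans hij) (lt_irrefl j), fun _ => hva⟩

theorem card_filter_not_compatible_le (hS : SmoothStruct E c lam w S) {i j : Fin m}
    (hne : (S j).Nonempty) (hij : i ≠ j) {a : V} (ha : a ∈ S i) :
    #((S j).filter (¬ Compatible E S j a ·)) ≤ lam * #(S j) := by
  rcases hij.lt_or_gt with hlt | hgt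
  · refine (Nat.cast_le.mpr (card_le_card ?_)).trans (hS.card_filter_not_adj_le_of_lt hne hlt ha)
    exact monotone_filter_right _ fun v _ hbad hav => hbad (hS.compatible_of_lt hlt ha hav)
  · refine (Nat.cast_le.mpr (card_le_card ?_)).trans (hS.card_filter_not_adj_le_of_gt hne hgt ha)
    exact monotone_filter_right _ fun v _ hbad hva => hbad (hS.compatible_of_gt hgt ha hva)

end SmoothStruct

theorem smooth_structure_compatible_vertex_general {V : Type*} [Fintype V] [Nonempty V]
    (E : V → V → Prop) (c lam : ℝ) (hc : 0 < c) {m : ℕ}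
    (w : Fin m → Bool) (S : Fin m → Finset V) (hS : SmoothStruct E c lam w S)
    (j : Fin m) (A : Finset V) (hA : ∀ x ∈ A, ∃ i : Fin m, i ≠ j ∧ x ∈ S i)
    (hk : (A.card : ℝ) * lam < 1) :
    ∃ v ∈ S j, ∀ a ∈ A, ∀ i : Fin m, a ∈ S i →
      (i < j → E a v) ∧ (j < i → E v a) := by
  have hne := hS.nonempty hc j
  refine exists_forall_of_card_filter_not_le (SmoothStruct.Compatible E S j) hne
    (fun a ha => ?_) hk
  obtain ⟨i, hij, hai⟩ := hA a ha
  exact hS.card_filter_not_compatible_le hne hij hai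

/-- If `kλ < 1`, then for any set `A` of `k` vertices outside `S_j` in a
smooth `(c,λ,w)`-structure there is a vertex `v ∈ S_j` compatible with all of
`A`: vertices of earlier sets beat `v` and `v` beats vertices of later sets. -/
theorem smooth_structure_compatible_vertex {V : Type*} [Fintype V] [Nonempty V]
    (E : V → V → Prop) (hT : IsTournament E) (c lam : ℝ) (hc : 0 < c)
    (hlam0 : 0 < lam) (hlam1 : lam < 1) {m : ℕ}
    (w : Fin m → Bool) (S : Fin m → Finset V) (hS : SmoothStruct E c lam w S)
    (j : Fin m) (A : Finset V) (hA : ∀ x ∈ A, ∃ i : Fin m, i ≠ j ∧ x ∈ S i)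
    (hk : (A.card : ℝ) * lam < 1) :
    ∃ v ∈ S j, ∀ a ∈ A, ∀ i : Fin m, a ∈ S i →
      (i < j → E a v) ∧ (j < i → E v a) :=
  smooth_structure_compatible_vertex_general E c lam hc w S hS j A hA hk
end
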